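/- arXiv:2001.01418 — 2 statements merged into one kernel-verified Lean document; each statement's English description precedes it below -/
import Mathlib

section
/- Let Δ be a k-dimensional simplicial complex on [s] and suppose G_α ∈ Δ for α ∈ ℤ^s. Then the facets of the degree complex of the symbolic power are given by F(Δ_α(I_Δ^{(n)})) = { F ∈ F(link_Δ(G_α)) : Σ_{i ∉ F ∪ G_α} α_i ≤ n − 1 }. -/
open MvPolynomial

variable (K : Type) [Field K] {N : ℕ}

/-- The "negative support" `G_α = {i : α i < 0}` of an exponent vector `α ∈ ℤ^N`. -/
def negSupp (α : Fin N → ℤ) : Finset (Fin N) :=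
  Finset.univ.filter (fun i => α i < 0)

/-- The multiplicative set generated by the variables `x_i`, `i ∈ W`. -/
noncomputable def varMonoid (W : Finset (Fin N)) : Submonoid (MvPolynomial (Fin N) K) :=
  Submonoid.closure ((fun i => (X i : MvPolynomial (Fin N) K)) '' ↑W)

/-- The Laurent monomial `x^α` in the localization `S[x_i^{-1} : i ∈ W]`,
for `α ∈ ℤ^N` whose negative support is contained in `W`. -/
noncomputable def xPow (α : Fin N → ℤ) (W : Finset (Fin N)) (h : negSupp α ⊆ W) :
    Localization (varMonoid K W) :=
  algebraMap (MvPolynomial (Fin N) K) _ (∏ i, X i ^ (α i).toNat) *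
    IsLocalization.mk' (Localization (varMonoid K W)) (1 : MvPolynomial (Fin N) K)
      (⟨∏ i ∈ negSupp α, X i ^ (-(α i)).toNat,
        Submonoid.prod_mem _ (fun i hi =>
          pow_mem (Submonoid.subset_closure
            (Set.mem_image_of_mem _ (Finset.mem_coe.mpr (h hi)))) _)⟩ : varMonoid K W)

/-- The degree complex `Δ_α(I)` of a monomial ideal `I`:
`F ∈ Δ_α(I)` iff `F ⊆ [N] ∖ G_α` and `x^α ∉ I·S[x_i^{-1} : i ∈ F ∪ G_α]`. -/
def degreeComplex (I : Ideal (MvPolynomial (Fin N) K)) (α : Fin N → ℤ) :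
    Set (Finset (Fin N)) :=
  {F | Disjoint F (negSupp α) ∧
    xPow K α (F ∪ negSupp α) (Finset.subset_union_right) ∉
      Ideal.map (algebraMap (MvPolynomial (Fin N) K)
        (Localization (varMonoid K (F ∪ negSupp α)))) I}

/-- The module of simplicial `K`-chains of `Δ` spanned by the faces of cardinality `m`. -/
abbrev chainModule (Δ : Set (Finset (Fin N))) (m : ℕ) : Type :=
  {F : Finset (Fin N) // F ∈ Δ ∧ F.card = m} →₀ K

open Classical in
/-- The simplicial boundary map from `m`-cardinality+1 chains to `m`-cardinality chains,
sending a face `F` to `∑_{i ∈ F} (-1)^{|{j ∈ F : j < i}|} (F ∖ {i})`. -/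
noncomputable def bdry (Δ : Set (Finset (Fin N))) (m : ℕ) :
    chainModule K Δ (m + 1) →ₗ[K] chainModule K Δ m :=
  Finsupp.lsum K (fun F =>
    ∑ i ∈ F.1.attach,
      ((-1 : K) ^ (F.1.filter (fun j => j < i.1)).card) •
        (if h : (F.1.erase i.1) ∈ Δ then
          Finsupp.lsingle (⟨F.1.erase i.1, h, by
            simp [Finset.card_erase_of_mem i.2, F.2.2]⟩ :
              {G : Finset (Fin N) // G ∈ Δ ∧ G.card = m})
        else 0))

/-- The full boundary map `∂_m : C_m → C_{m-1}`, with `∂_0 = 0`. -/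
noncomputable def bdryFrom (Δ : Set (Finset (Fin N))) :
    (m : ℕ) → (chainModule K Δ m →ₗ[K] chainModule K Δ (m - 1))
  | 0 => 0
  | (n + 1) => bdry K Δ n

/-- The reduced simplicial homology `H̃_{m-1}(Δ; K) = ker ∂_m / im ∂_{m+1}`,
indexed by the cardinality level `m` (so dimension `m - 1`). -/
noncomputable def homologyAtLevel (Δ : Set (Finset (Fin N))) (m : ℕ) : Type :=
  letI : HasQuotient (LinearMap.ker (bdryFrom K Δ m))
      (Submodule K (LinearMap.ker (bdryFrom K Δ m))) := Submodule.hasQuotient (R := K) (M := LinearMap.ker (bdryFrom K Δ m))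
  LinearMap.ker (bdryFrom K Δ m) ⧸
    Submodule.comap (LinearMap.ker (bdryFrom K Δ m)).subtype
      (LinearMap.range (bdry K Δ m))

/-- `H̃_d(Δ; K) ≠ 0`, for an arbitrary integer dimension `d`
(nonzero is only possible when `d ≥ -1`). -/
def reducedHomologyNonzero (Δ : Set (Finset (Fin N))) (d : ℤ) : Prop :=
  ∃ m : ℕ, (m : ℤ) = d + 1 ∧ Nontrivial (homologyAtLevel K Δ m)

/-- The Stanley–Reisner ideal of `Δ`, generated by the squarefree monomials
`x_F = ∏_{i ∈ F} x_i` over the non-faces `F` of `Δ`. -/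
noncomputable def stanleyReisner (Δ : Set (Finset (Fin N))) : Ideal (MvPolynomial (Fin N) K) :=
  Ideal.span {f | ∃ F : Finset (Fin N), F ∉ Δ ∧ f = ∏ i ∈ F, X i}

/-- The monomial prime `P_F = (x_i : i ∉ F)`. -/
noncomputable def facePrime (F : Finset (Fin N)) : Ideal (MvPolynomial (Fin N) K) :=
  Ideal.span {f | ∃ i : Fin N, i ∉ F ∧ f = X i}

/-- The set of facets (maximal faces) of `Δ`. -/
def facets (Δ : Set (Finset (Fin N))) : Set (Finset (Fin N)) :=
  {F | F ∈ Δ ∧ ∀ G ∈ Δ, F ⊆ G → F = G}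

/-- `Δ` is a simplicial complex: closed under taking subsets. -/
def DownClosed (Δ : Set (Finset (Fin N))) : Prop :=
  ∀ F ∈ Δ, ∀ G : Finset (Fin N), G ⊆ F → G ∈ Δ

/-- The `n`-th symbolic power `I_Δ^{(n)} = ⋂_{F facet of Δ} P_F^n`
of the Stanley–Reisner ideal of `Δ`. -/
noncomputable def symbolicPowerSR (Δ : Set (Finset (Fin N))) (n : ℕ) : Ideal (MvPolynomial (Fin N) K) :=
  ⨅ F ∈ facets Δ, (facePrime K F) ^ n

/-- The simplicial complex `Δ(I) = {F : x_F ∉ √I}` attached to a monomial ideal `I`. -/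
def complexOfIdeal (I : Ideal (MvPolynomial (Fin N) K)) : Set (Finset (Fin N)) :=
  {F | (∏ i ∈ F, X i) ∉ I.radical}

/-- The set of degrees `t` in which the `i`-th graded local cohomology module
`H^i_m(S/I)_t` of a monomial quotient is nonzero; by Takayama's formula this is
expressed through the degree complexes: `H^i_m(S/I)_α ≠ 0` iff `G_α ∈ Δ(I)` and
`H̃_{i - |G_α| - 1}(Δ_α(I); K) ≠ 0`. -/
def localCohNonzeroDegrees (i : ℕ) (I : Ideal (MvPolynomial (Fin N) K)) : Set ℤ :=
  {t | ∃ α : Fin N → ℤ, (∑ j, α j) = t ∧ negSupp α ∈ complexOfIdeal K I ∧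
    reducedHomologyNonzero K (degreeComplex K I α) ((i : ℤ) - (negSupp α).card - 1)}

/-- The `a_i`-invariant `a_i(S/I) = max {t : H^i_m(S/I)_t ≠ 0}` of a monomial quotient,
via Takayama's formula. -/
noncomputable def aInvariant (i : ℕ) (I : Ideal (MvPolynomial (Fin N) K)) : ℤ :=
  sSup (localCohNonzeroDegrees K i I)

/-- The link of a face `G` in `Δ`. -/
def link (Δ : Set (Finset (Fin N))) (G : Finset (Fin N)) : Set (Finset (Fin N)) :=
  {F | Disjoint F G ∧ F ∪ G ∈ Δ}

/-- The pure `k`-skeleton of `Γ`: the subcomplex generated by the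
`k`-dimensional (i.e. `(k+1)`-element) faces of `Γ`. -/
def pureSkeleton (Γ : Set (Finset (Fin N))) (k : ℕ) : Set (Finset (Fin N)) :=
  {F | ∃ G ∈ Γ, G.card = k + 1 ∧ F ⊆ G}

/-!
Localizing at the variables of `W = F ∪ G_α` makes `x^α` a unit multiple of the monomial
`x^{α⁺}`, so `x^α` lies in `I_Δ^{(n)}` localized iff some `m * x^{α⁺}` with `m` a monomial in
`W` lies in every `P_A^n`, `A` a facet. For facets `A ⊉ W` already `m = x_W^n` lies in `P_A^n`;
for `A ⊇ W` it says exactly `∑_{i ∉ A} α_i ≥ n`, which one reads off by sending `x_i ↦ 1` for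
`i ∈ A` and `x_i ↦ t` otherwise. Hence `Δ_α(I_Δ^{(n)})` is the link of `G_α` in the complex
generated by the facets `A` with `∑_{i ∉ A} α_i ≤ n - 1`. These form an antichain, so they are
its facets, and taking facets commutes with taking links.
-/

section Facets

lemma mem_facets_iff_maximal {Δ : Set (Finset (Fin N))} {F : Finset (Fin N)} :
    F ∈ facets Δ ↔ Maximal (· ∈ Δ) F :=
  and_congr_right fun _ => forall₂_congr fun _ _ =>
    ⟨fun h hFG => (h hFG).ge, fun h hFG => le_antisymm hFG (h hFG)⟩

lemma isAntichain_facets (Δ : Set (Finset (Fin N))) : IsAntichain (· ≤ ·) (facets Δ) := by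
  have : facets Δ = {F | Maximal (· ∈ Δ) F} := Set.ext fun _ => mem_facets_iff_maximal
  exact this ▸ setOfPred_maximal_antichain _

lemma facets_lowerClosure {P : Set (Finset (Fin N))} (hP : IsAntichain (· ≤ ·) P) :
    facets (lowerClosure P : Set (Finset (Fin N))) = P :=
  Set.ext fun _ => mem_facets_iff_maximal.trans hP.maximal_mem_lowerClosure_iff_mem

lemma facets_link (Δ : Set (Finset (Fin N))) (G : Finset (Fin N)) :
    facets (link Δ G) = link (facets Δ) G := by
  ext F
  constructor
  · rintro ⟨⟨hFG, hF⟩, hmax⟩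
    refine ⟨hFG, hF, fun H hH hsub => ?_⟩
    have hGH : G ⊆ H := Finset.subset_union_right.trans hsub
    have hF_eq : F = H \ G :=
      hmax _ ⟨Finset.sdiff_disjoint, by rwa [Finset.sdiff_union_of_subset hGH]⟩
        (Finset.subset_sdiff.mpr ⟨Finset.subset_union_left.trans hsub, hFG⟩)
    rw [hF_eq, Finset.sdiff_union_of_subset hGH]
  · rintro ⟨hFG, hF, hmax⟩
    refine ⟨⟨hFG, hF⟩, fun H ⟨hHG, hH⟩ hsub => ?_⟩
    have hunion : F ∪ G = H ∪ G := hmax _ hH (Finset.union_subset_union_left hsub)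
    rw [← Finset.union_sdiff_cancel_right hFG, hunion, Finset.union_sdiff_cancel_right hHG]

end Facets

section Monomials

lemma mem_negSupp {α : Fin N → ℤ} {i : Fin N} : i ∈ negSupp α ↔ α i < 0 := by
  simp [negSupp]

lemma natCast_sum_compl_toNat {α : Fin N → ℤ} {A : Finset (Fin N)} (h : negSupp α ⊆ A) :
    ((∑ i ∈ Aᶜ, (α i).toNat : ℕ) : ℤ) = ∑ i ∈ Aᶜ, α i := by
  push_cast
  refine Finset.sum_congr rfl fun i hi => Int.toNat_of_nonneg ?_
  exact not_lt.mp fun hneg => Finset.mem_compl.mp hi (h (mem_negSupp.mpr hneg))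

lemma X_mem_varMonoid {W : Finset (Fin N)} {i : Fin N} (hi : i ∈ W) :
    (X i : MvPolynomial (Fin N) K) ∈ varMonoid K W :=
  Submonoid.subset_closure (Set.mem_image_of_mem _ hi)

lemma X_mem_facePrime {A : Finset (Fin N)} {i : Fin N} (hi : i ∉ A) :
    (X i : MvPolynomial (Fin N) K) ∈ facePrime K A :=
  Ideal.subset_span ⟨i, hi, rfl⟩

lemma prod_X_pow_mem_facePrime_pow {A : Finset (Fin N)} {n : ℕ} {β : Fin N → ℕ}
    (h : n ≤ ∑ i ∈ Aᶜ, β i) : ∏ i, X i ^ β i ∈ facePrime K A ^ n := by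
  rw [← Finset.prod_mul_prod_compl A]
  refine Ideal.mul_mem_left _ _ (Ideal.pow_le_pow_right h ?_)
  rw [← Finset.prod_pow_eq_pow_sum]
  exact Ideal.prod_mem_prod fun i hi =>
    Ideal.pow_mem_pow (X_mem_facePrime K (Finset.mem_compl.mp hi)) _

/-- Reads off the `P_A`-adic order of a monomial, and is trivial on `varMonoid K W` for
`W ⊆ A`. -/
noncomputable def collapse (A : Finset (Fin N)) : MvPolynomial (Fin N) K →ₐ[K] Polynomial K :=
  aeval fun i => if i ∈ A then 1 else Polynomial.X

lemma collapse_eq_one_of_mem_varMonoid {W A : Finset (Fin N)} (hWA : W ⊆ A)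
    {m : MvPolynomial (Fin N) K} (hm : m ∈ varMonoid K W) : collapse K A m = 1 := by
  have hle : varMonoid K W ≤ MonoidHom.mker (collapse K A).toMonoidHom := by
    rw [varMonoid, Submonoid.closure_le]
    rintro _ ⟨i, hi, rfl⟩
    simp [collapse, hWA hi]
  exact hle hm

lemma collapse_prod_X_pow (A : Finset (Fin N)) (β : Fin N → ℕ) :
    collapse K A (∏ i, X i ^ β i) = Polynomial.X ^ ∑ i ∈ Aᶜ, β i := by
  have hA : ∀ i ∈ A, collapse K A (X i ^ β i) = 1 := by
    intro i hi
    simp [collapse, hi]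
  have hAc : ∀ i ∈ Aᶜ, collapse K A (X i ^ β i) = Polynomial.X ^ β i := by
    intro i hi
    simp [collapse, Finset.mem_compl.mp hi]
  rw [map_prod, ← Finset.prod_mul_prod_compl A, Finset.prod_congr rfl hA,
    Finset.prod_congr rfl hAc, Finset.prod_const_one, one_mul, Finset.prod_pow_eq_pow_sum]

lemma X_pow_dvd_collapse_of_mem_facePrime_pow {A : Finset (Fin N)} {n : ℕ}
    {p : MvPolynomial (Fin N) K} (hp : p ∈ facePrime K A ^ n) :
    Polynomial.X ^ n ∣ collapse K A p := by
  have hmap : (facePrime K A).map (collapse K A) ≤ Ideal.span {Polynomial.X} := by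
    rw [facePrime, Ideal.map_span, Ideal.span_le]
    rintro _ ⟨_, ⟨i, hi, rfl⟩, rfl⟩
    simp [collapse, hi]
  have hpow : collapse K A p ∈ Ideal.span {Polynomial.X} ^ n := by
    refine Ideal.pow_right_mono hmap n ?_
    rw [← Ideal.map_pow]
    exact Ideal.mem_map_of_mem _ hp
  rwa [Ideal.span_singleton_pow, Ideal.mem_span_singleton] at hpow

lemma le_sum_compl_of_mul_prod_X_pow_mem {W A : Finset (Fin N)} (hWA : W ⊆ A) {n : ℕ}
    {β : Fin N → ℕ} {m : MvPolynomial (Fin N) K} (hm : m ∈ varMonoid K W)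
    (h : m * ∏ i, X i ^ β i ∈ facePrime K A ^ n) : n ≤ ∑ i ∈ Aᶜ, β i := by
  have hdvd := X_pow_dvd_collapse_of_mem_facePrime_pow K h
  rw [map_mul, collapse_eq_one_of_mem_varMonoid K hWA hm, one_mul, collapse_prod_X_pow] at hdvd
  exact (pow_dvd_pow_iff Polynomial.X_ne_zero Polynomial.not_isUnit_X).mp hdvd

end Monomials

section DegreeComplex

lemma xPow_mem_map_iff (I : Ideal (MvPolynomial (Fin N) K)) (α : Fin N → ℤ)
    (W : Finset (Fin N)) (h : negSupp α ⊆ W) :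
    xPow K α W h ∈ I.map (algebraMap _ (Localization (varMonoid K W))) ↔
      ∃ m ∈ varMonoid K W, m * ∏ i, X i ^ (α i).toNat ∈ I := by
  rw [xPow, ← IsLocalization.mk'_eq_mul_mk'_one, IsLocalization.mk'_mem_map_algebraMap_iff]

lemma xPow_mem_map_symbolicPowerSR_iff (Δ : Set (Finset (Fin N))) (n : ℕ) (α : Fin N → ℤ)
    (W : Finset (Fin N)) (h : negSupp α ⊆ W) :
    xPow K α W h ∈ (symbolicPowerSR K Δ n).map (algebraMap _ (Localization (varMonoid K W))) ↔
      ∀ A ∈ facets Δ, W ⊆ A → (n : ℤ) ≤ ∑ i ∈ Aᶜ, α i := by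
  simp only [xPow_mem_map_iff, symbolicPowerSR, Ideal.mem_iInf]
  constructor
  · rintro ⟨m, hm, hmem⟩ A hA hWA
    rw [← natCast_sum_compl_toNat (h.trans hWA)]
    exact_mod_cast le_sum_compl_of_mul_prod_X_pow_mem K hWA hm (hmem A hA)
  · intro hsum
    refine ⟨(∏ i ∈ W, X i) ^ n,
      pow_mem (prod_mem fun i hi => X_mem_varMonoid K hi) n, fun A hA => ?_⟩
    by_cases hWA : W ⊆ A
    · refine Ideal.mul_mem_left _ _ (prod_X_pow_mem_facePrime_pow K ?_)
      have := hsum A hA hWA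
      rw [← natCast_sum_compl_toNat (h.trans hWA)] at this
      exact_mod_cast this
    · obtain ⟨j, hjW, hjA⟩ := Finset.not_subset.mp hWA
      exact Ideal.mul_mem_right _ _
        (Ideal.pow_mem_pow (Ideal.prod_mem _ hjW (X_mem_facePrime K hjA)) n)

lemma degreeComplex_symbolicPowerSR (Δ : Set (Finset (Fin N))) (n : ℕ) (α : Fin N → ℤ) :
    degreeComplex K (symbolicPowerSR K Δ n) α =
      link (lowerClosure {A | A ∈ facets Δ ∧ ∑ i ∈ Aᶜ, α i ≤ (n : ℤ) - 1}) (negSupp α) := by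
  ext F
  simp only [degreeComplex, link, Set.mem_ofPred_eq, xPow_mem_map_symbolicPowerSR_iff,
    SetLike.mem_coe, mem_lowerClosure]
  push Not
  refine and_congr_right fun _ => exists_congr fun A => ?_
  constructor
  · rintro ⟨hA, hsub, hlt⟩
    exact ⟨⟨hA, by omega⟩, hsub⟩
  · rintro ⟨⟨hA, hle⟩, hsub⟩
    exact ⟨hA, hsub, by omega⟩

end DegreeComplex

theorem facets_degreeComplex_symbolicPower
    (Δ : Set (Finset (Fin N)))
    (n : ℕ) (α : Fin N → ℤ) :
    facets (degreeComplex K (symbolicPowerSR K Δ n) α) =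
      {F | F ∈ facets (link Δ (negSupp α)) ∧
        (∑ i ∈ (F ∪ negSupp α)ᶜ, α i) ≤ (n : ℤ) - 1} := by
  rw [degreeComplex_symbolicPowerSR, facets_link,
    facets_lowerClosure ((isAntichain_facets Δ).subset fun _ hA => hA.1), facets_link]
  ext F
  simp only [link, Set.mem_ofPred_eq, and_assoc]
end

section
/- Let Δ be a k-dimensional simplicial complex on [s] and α ∈ ℤ^s with G_α ∈ Δ. Then the pure k-th skeletons of the degree complexes of the ordinary and symbolic powers agree: Δ_α(I_Δ^n)^{(k)} = Δ_α(I_Δ^{(n)})^{(k)} for all n ≥ 1, where Γ^{(k)} denotes the subcomplex generated by the k-dimensional faces of Γ. -/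
open MvPolynomial

variable (K : Type) [Field K] {N : ℕ}

/-! A face `F` of `Δ_α(I_Δ^n)` with `k + 1` vertices forces `W = F ∪ G_α` to be a face of `Δ`
(otherwise some `x_T`, `T ⊆ W` a non-face, is a unit of `S_W = S[x_i^{-1} : i ∈ W]` lying in
`I_Δ`), hence a facet, as `Δ` has dimension `k`. For a facet `W`, every `x_i` with `i ∉ W`
equals `x_{W ∪ {i}} · x_W⁻¹ ∈ I_Δ S_W`, so `I_Δ^{(n)} S_W ⊆ P_W^n S_W ⊆ I_Δ^n S_W`.
The reverse inclusion comes from `I_Δ^n ⊆ I_Δ^{(n)}`. -/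

section DegreeComplex

variable {K}

local notation "locMap " W => algebraMap (MvPolynomial (Fin N) K) (Localization (varMonoid K W))

theorem isUnit_locMap_prod_X {T W : Finset (Fin N)} (hTW : T ⊆ W) :
    IsUnit ((locMap W) (∏ i ∈ T, X i)) :=
  IsLocalization.map_units _ (⟨_, Submonoid.prod_mem _ fun _ hi =>
    Submonoid.subset_closure (Set.mem_image_of_mem _ (Finset.mem_coe.mpr (hTW hi)))⟩ :
      varMonoid K W)

theorem prod_X_mem_stanleyReisner {Δ : Set (Finset (Fin N))} {F : Finset (Fin N)} (hF : F ∉ Δ) :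
    (∏ i ∈ F, X i) ∈ stanleyReisner K Δ :=
  Ideal.subset_span ⟨F, hF, rfl⟩

theorem stanleyReisner_le_facePrime {Δ : Set (Finset (Fin N))} (hΔ : DownClosed Δ)
    {G : Finset (Fin N)} (hG : G ∈ Δ) : stanleyReisner K Δ ≤ facePrime K G := by
  rw [stanleyReisner, Ideal.span_le]
  rintro _ ⟨F, hF, rfl⟩
  obtain ⟨i, hiF, hiG⟩ := Finset.not_subset.mp fun hFG => hF (hΔ G hG F hFG)
  rw [← Finset.mul_prod_erase F _ hiF]
  exact Ideal.mul_mem_right _ _ (Ideal.subset_span ⟨i, hiG, rfl⟩)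

theorem stanleyReisner_pow_le_symbolicPowerSR {Δ : Set (Finset (Fin N))} (hΔ : DownClosed Δ)
    (n : ℕ) : stanleyReisner K Δ ^ n ≤ symbolicPowerSR K Δ n :=
  le_iInf₂ fun _ hF => Ideal.pow_right_mono (stanleyReisner_le_facePrime hΔ hF.1) n

theorem map_stanleyReisner_pow_eq_top {Δ : Set (Finset (Fin N))} {T W : Finset (Fin N)}
    (hTW : T ⊆ W) (hT : T ∉ Δ) (n : ℕ) :
    Ideal.map (locMap W) (stanleyReisner K Δ ^ n) = ⊤ := by
  refine Ideal.eq_top_of_isUnit_mem _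
    (Ideal.mem_map_of_mem _ (Ideal.pow_mem_pow (prod_X_mem_stanleyReisner hT) n)) ?_
  rw [map_pow]
  exact (isUnit_locMap_prod_X hTW).pow n

theorem map_facePrime_le_map_stanleyReisner {Δ : Set (Finset (Fin N))} {W : Finset (Fin N)}
    (hW : W ∈ facets Δ) :
    Ideal.map (locMap W) (facePrime K W) ≤ Ideal.map (locMap W) (stanleyReisner K Δ) := by
  rw [facePrime, Ideal.map_span, Ideal.span_le]
  rintro _ ⟨_, ⟨i, hiW, rfl⟩, rfl⟩
  have hnonface : insert i W ∉ Δ := fun h =>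
    hiW (hW.2 _ h (Finset.subset_insert i W) ▸ Finset.mem_insert_self i W)
  have hprod := Ideal.mem_map_of_mem (locMap W) (prod_X_mem_stanleyReisner (K := K) hnonface)
  rw [Finset.prod_insert hiW, map_mul] at hprod
  obtain ⟨u, hu⟩ := isUnit_locMap_prod_X (K := K) (subset_refl W)
  have hXi : (locMap W) (X i) = (locMap W) (X i) * (locMap W) (∏ j ∈ W, X j) * ↑u⁻¹ := by
    rw [← hu, mul_assoc, Units.mul_inv, mul_one]
  rw [SetLike.mem_coe, hXi]
  exact Ideal.mul_mem_right _ _ hprod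

theorem map_symbolicPowerSR_le_map_stanleyReisner_pow {Δ : Set (Finset (Fin N))}
    {W : Finset (Fin N)} (hW : W ∈ facets Δ) (n : ℕ) :
    Ideal.map (locMap W) (symbolicPowerSR K Δ n) ≤
      Ideal.map (locMap W) (stanleyReisner K Δ ^ n) :=
  calc Ideal.map (locMap W) (symbolicPowerSR K Δ n)
      ≤ Ideal.map (locMap W) (facePrime K W ^ n) := Ideal.map_mono (iInf₂_le W hW)
    _ = Ideal.map (locMap W) (facePrime K W) ^ n := Ideal.map_pow _ _ _
    _ ≤ Ideal.map (locMap W) (stanleyReisner K Δ) ^ n :=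
        Ideal.pow_right_mono (map_facePrime_le_map_stanleyReisner hW) n
    _ = Ideal.map (locMap W) (stanleyReisner K Δ ^ n) := (Ideal.map_pow _ _ _).symm

theorem degreeComplex_antitone {I J : Ideal (MvPolynomial (Fin N) K)} (hIJ : I ≤ J)
    (α : Fin N → ℤ) : degreeComplex K J α ⊆ degreeComplex K I α :=
  fun _ ⟨hdisj, hnot⟩ => ⟨hdisj, fun hmem => hnot (Ideal.map_mono hIJ hmem)⟩

theorem union_negSupp_mem_of_mem_degreeComplex {Δ : Set (Finset (Fin N))} {n : ℕ}
    {α : Fin N → ℤ} {F : Finset (Fin N)} (hF : F ∈ degreeComplex K (stanleyReisner K Δ ^ n) α) :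
    F ∪ negSupp α ∈ Δ := by
  by_contra hW
  exact hF.2 (map_stanleyReisner_pow_eq_top (K := K) (subset_refl _) hW n ▸ Submodule.mem_top)

theorem mem_degreeComplex_symbolicPowerSR_of_mem_facets {Δ : Set (Finset (Fin N))} {n : ℕ}
    {α : Fin N → ℤ} {F : Finset (Fin N)} (hW : F ∪ negSupp α ∈ facets Δ)
    (hF : F ∈ degreeComplex K (stanleyReisner K Δ ^ n) α) :
    F ∈ degreeComplex K (symbolicPowerSR K Δ n) α :=
  ⟨hF.1, fun hmem => hF.2 (map_symbolicPowerSR_le_map_stanleyReisner_pow hW n hmem)⟩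

end DegreeComplex

theorem mem_facets_of_succ_le_card {Δ : Set (Finset (Fin N))} {k : ℕ}
    (hdim : ∀ G ∈ Δ, G.card ≤ k + 1) {W : Finset (Fin N)} (hW : W ∈ Δ) (hcard : k + 1 ≤ W.card) :
    W ∈ facets Δ :=
  ⟨hW, fun _ hG hWG => Finset.eq_of_subset_of_card_le hWG ((hdim _ hG).trans hcard)⟩

theorem pureSkeleton_subset_of_forall_card_eq {Γ Γ' : Set (Finset (Fin N))} {k : ℕ}
    (h : ∀ G ∈ Γ, G.card = k + 1 → G ∈ Γ') : pureSkeleton Γ k ⊆ pureSkeleton Γ' k :=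
  fun _ ⟨G, hG, hcard, hFG⟩ => ⟨G, h G hG hcard, hcard, hFG⟩

theorem pureSkeleton_degreeComplex_pow_eq_symbolic
    (Δ : Set (Finset (Fin N))) (hΔ : DownClosed Δ) (k : ℕ)
    (hdim : ∀ G ∈ Δ, G.card ≤ k + 1)
    (n : ℕ) (α : Fin N → ℤ) :
    pureSkeleton (degreeComplex K ((stanleyReisner K Δ) ^ n) α) k =
      pureSkeleton (degreeComplex K (symbolicPowerSR K Δ n) α) k := by
  refine subset_antisymm (pureSkeleton_subset_of_forall_card_eq fun F hF hcard => ?_)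
    (pureSkeleton_subset_of_forall_card_eq fun F hF _ =>
      degreeComplex_antitone (stanleyReisner_pow_le_symbolicPowerSR hΔ n) α hF)
  have hW : F ∪ negSupp α ∈ facets Δ :=
    mem_facets_of_succ_le_card hdim (union_negSupp_mem_of_mem_degreeComplex hF)
      (hcard ▸ Finset.card_le_card Finset.subset_union_left)
  exact mem_degreeComplex_symbolicPowerSR_of_mem_facets hW hF
end
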